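/- arXiv:1004.1786 — 3 statements merged into one kernel-verified Lean document; each statement's English description precedes it below -/
import Mathlib

section
/- Define the symmetric bilinear form B on ℝ⁵ by B(x,y) := x₁y₄ + x₄y₁ + x₂y₅ + x₅y₂ + x₃y₃. Let f : ℝ³ → ℝ⁵, f(r,s,t) := (s, −rt + r⁴/4, t, r, r²), and M := range f. Then for every (r₀,s₀,t₀) ∈ ℝ³ with p := f(r₀,s₀,t₀): the tangent space T := span{(0, −t₀+r₀³, 0, 1, 2r₀), (1,0,0,0,0), (0,−r₀,1,0,0)} (the span of the partial derivatives of f at (r₀,s₀,t₀)) is 3-dimensional, the restriction of B to T is nondegenerate with exactly one negative and two positive directions (Lorentzian signature), ℝ⁵ = T ⊕ T^⊥ᴮ, and the affine reflection σ_p defined by σ_p(p + v + w) := p − v + w for v ∈ T and w ∈ T^⊥ᴮ maps M bijectively onto M. -/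
/-- The bilinear form B(x,y) = x₁y₄ + x₄y₁ + x₂y₅ + x₅y₂ + x₃y₃ on ℝ⁵. -/
def B5 (x y : Fin 5 → ℝ) : ℝ :=
  x 0 * y 3 + x 3 * y 0 + x 1 * y 4 + x 4 * y 1 + x 2 * y 2

/-- The embedding f(r,s,t) = (s, −rt + r⁴/4, t, r, r²) of ℝ³ into ℝ⁵. -/
noncomputable def f13 : ℝ × ℝ × ℝ → (Fin 5 → ℝ) := fun p =>
  ![p.2.1, -(p.1 * p.2.2) + p.1 ^ 4 / 4, p.2.2, p.1, p.1 ^ 2]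

/-- The tangent space of the image of f13 at f13(r₀,s₀,t₀): the span of the partial
derivatives of f13. -/
def T13 (r₀ t₀ : ℝ) : Submodule ℝ (Fin 5 → ℝ) :=
  Submodule.span ℝ {![0, -t₀ + r₀ ^ 3, 0, 1, 2 * r₀], ![1, 0, 0, 0, 0], ![0, -r₀, 1, 0, 0]}

/-- The B5-orthogonal complement of a subspace of ℝ⁵. -/
def perp5 (T : Submodule ℝ (Fin 5 → ℝ)) : Submodule ℝ (Fin 5 → ℝ) where
  carrier := {w | ∀ v ∈ T, B5 w v = 0}
  add_mem' := by
    intro x y hx hy v hv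
    have h1 := hx v hv
    have h2 := hy v hv
    simp only [B5, Pi.add_apply] at h1 h2 ⊢
    linear_combination h1 + h2
  zero_mem' := by
    intro v hv
    simp [B5]
  smul_mem' := by
    intro c x hx v hv
    have h := hx v hv
    simp only [B5, Pi.smul_apply, smul_eq_mul] at h ⊢
    linear_combination c * h

lemma mem_perp5 (T : Submodule ℝ (Fin 5 → ℝ)) (w : Fin 5 → ℝ) :
    w ∈ perp5 T ↔ ∀ v ∈ T, B5 w v = 0 := Iff.rfl

lemma mem_perp5_span (S : Set (Fin 5 → ℝ)) (w : Fin 5 → ℝ)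
    (h : ∀ v ∈ S, B5 w v = 0) : w ∈ perp5 (Submodule.span ℝ S) := by
  rw [mem_perp5]
  intro v hv
  induction hv using Submodule.span_induction with
  | mem x hx => exact h x hx
  | zero => simp [B5]
  | add x y _ _ hx hy =>
      simp only [B5, Pi.add_apply] at hx hy ⊢
      linear_combination hx + hy
  | smul c x _ hx =>
      simp only [B5, Pi.smul_apply, smul_eq_mul] at hx ⊢
      linear_combination c * hx

lemma mem_span_triple {a b c x : Fin 5 → ℝ}
    (h : x ∈ Submodule.span ℝ ({a, b, c} : Set (Fin 5 → ℝ))) :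
    ∃ α β γ : ℝ, x = α • a + β • b + γ • c := by
  rw [Submodule.mem_span_insert] at h
  obtain ⟨α, z, hz, rfl⟩ := h
  rw [Submodule.mem_span_insert] at hz
  obtain ⟨β, z', hz', rfl⟩ := hz
  rw [Submodule.mem_span_singleton] at hz'
  obtain ⟨γ, rfl⟩ := hz'
  exact ⟨α, β, γ, by abel⟩

/-- The linear part of the reflection at the affine normal space of the image of f13. -/
def Rm13 (r t : ℝ) (y : Fin 5 → ℝ) : Fin 5 → ℝ :=
  ![-y 0 - 4*r*y 1 - 4*r^2*y 2 - 8*r*t*y 3 + 2*(t+r^3)*y 4,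
    y 1 + 2*r*y 2 + 2*(t+r^3)*y 3 - 2*r^2*y 4,
    -y 2 - 4*r^2*y 3 + 2*r*y 4,
    -y 3,
    -4*r*y 3 + y 4]

lemma Rm13_add (r t : ℝ) (y z : Fin 5 → ℝ) :
    Rm13 r t (y + z) = Rm13 r t y + Rm13 r t z := by
  funext i
  fin_cases i <;> (simp [Rm13]; try ring)

lemma Rm13_smul (r t : ℝ) (a : ℝ) (y : Fin 5 → ℝ) :
    Rm13 r t (a • y) = a • Rm13 r t y := by
  funext i
  fin_cases i <;> (simp [Rm13]; try ring)

/-- The reflection at the affine normal space of the image of f13 at f13(r₀,s₀,t₀). -/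
noncomputable def refl13 (r₀ s₀ t₀ : ℝ) : (Fin 5 → ℝ) → (Fin 5 → ℝ) := fun x =>
  f13 (r₀, s₀, t₀) + Rm13 r₀ t₀ (x - f13 (r₀, s₀, t₀))

/-- The induced involution in parameter space. -/
noncomputable def g13 (r₀ s₀ t₀ : ℝ) : ℝ × ℝ × ℝ → ℝ × ℝ × ℝ := fun q =>
  (2*r₀ - q.1,
   2*s₀ - q.2.1 + 4*r₀*q.1*q.2.2 - r₀*q.1^4 - r₀^5 - 4*r₀^2*q.2.2 - 8*r₀*t₀*q.1
     + 6*r₀^2*t₀ + 2*t₀*q.1^2 + 2*r₀^3*q.1^2,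
   2*t₀ - q.2.2 + 2*r₀*(q.1 - r₀)^2)

lemma refl13_invol (r₀ s₀ t₀ : ℝ) (x : Fin 5 → ℝ) :
    refl13 r₀ s₀ t₀ (refl13 r₀ s₀ t₀ x) = x := by
  funext i
  fin_cases i <;> (simp [refl13, Rm13, f13]; try ring)

lemma refl13_f (r₀ s₀ t₀ : ℝ) (q : ℝ × ℝ × ℝ) :
    refl13 r₀ s₀ t₀ (f13 q) = f13 (g13 r₀ s₀ t₀ q) := by
  funext i
  fin_cases i <;> (simp [refl13, Rm13, f13, g13]; try ring)

/-- The submanifold M = f13(ℝ³) ⊆ (ℝ⁵, B5) is an extrinsic symmetric space: at each point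
the tangent space is 3-dimensional, nondegenerate of Lorentzian signature (one negative,
two positive directions), ℝ⁵ splits as its direct sum with its orthogonal complement, and
M is invariant under the reflection at each affine normal space. -/
theorem stmt13 (r₀ s₀ t₀ : ℝ) :
    Module.finrank ℝ ↥(T13 r₀ t₀) = 3 ∧
      (∃ v₁ v₂ v₃ : Fin 5 → ℝ, v₁ ∈ T13 r₀ t₀ ∧ v₂ ∈ T13 r₀ t₀ ∧ v₃ ∈ T13 r₀ t₀ ∧
        B5 v₁ v₁ < 0 ∧ 0 < B5 v₂ v₂ ∧ 0 < B5 v₃ v₃ ∧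
        B5 v₁ v₂ = 0 ∧ B5 v₁ v₃ = 0 ∧ B5 v₂ v₃ = 0 ∧
        T13 r₀ t₀ = Submodule.span ℝ {v₁, v₂, v₃}) ∧
      (∀ u ∈ T13 r₀ t₀, (∀ u' ∈ T13 r₀ t₀, B5 u u' = 0) → u = 0) ∧
      IsCompl (T13 r₀ t₀) (perp5 (T13 r₀ t₀)) ∧
      (∃ σ : (Fin 5 → ℝ) → (Fin 5 → ℝ),
        (∀ v ∈ T13 r₀ t₀, ∀ w ∈ perp5 (T13 r₀ t₀),
          σ (f13 (r₀, s₀, t₀) + v + w) = f13 (r₀, s₀, t₀) - v + w) ∧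
        Set.BijOn σ (Set.range f13) (Set.range f13)) := by
  set u1 : Fin 5 → ℝ := ![0, -t₀ + r₀ ^ 3, 0, 1, 2 * r₀] with hu1def
  set u2 : Fin 5 → ℝ := ![1, 0, 0, 0, 0] with hu2def
  set u3 : Fin 5 → ℝ := ![0, -r₀, 1, 0, 0] with hu3def
  have hT : T13 r₀ t₀ = Submodule.span ℝ ({u1, u2, u3} : Set (Fin 5 → ℝ)) := rfl
  have hu1 : u1 ∈ T13 r₀ t₀ := by
    rw [hT]; exact Submodule.subset_span (by simp)
  have hu2 : u2 ∈ T13 r₀ t₀ := by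
    rw [hT]; exact Submodule.subset_span (by simp)
  have hu3 : u3 ∈ T13 r₀ t₀ := by
    rw [hT]; exact Submodule.subset_span (by simp)
  -- linear independence of u1, u2, u3
  have hli : LinearIndependent ℝ ![u1, u2, u3] := by
    rw [Fintype.linearIndependent_iff]
    intro g hg
    have h3 := congrFun hg 3
    have h2 := congrFun hg 2
    have h0 := congrFun hg 0
    simp [hu1def, hu2def, hu3def, Fin.sum_univ_three, Matrix.vecHead, Matrix.vecTail] at h3 h2 h0
    intro i
    fin_cases i <;> simp <;> linarith
  -- part 1: finrank = 3
  have hfin : Module.finrank ℝ ↥(T13 r₀ t₀) = 3 := by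
    have hr : Set.range ![u1, u2, u3] = ({u1, u2, u3} : Set (Fin 5 → ℝ)) := by
      ext x
      simp [Matrix.range_cons, Matrix.range_empty]
      tauto
    have hcard := finrank_span_eq_card (R := ℝ) hli
    rw [hr] at hcard
    rw [hT, hcard]
    simp
  -- nondegeneracy (part 3)
  have hnd : ∀ u ∈ T13 r₀ t₀, (∀ u' ∈ T13 r₀ t₀, B5 u u' = 0) → u = 0 := by
    intro u hu hB
    rw [hT] at hu
    obtain ⟨α, β, γ, rfl⟩ := mem_span_triple hu
    have b2 : B5 (α • u1 + β • u2 + γ • u3) u2 = α := by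
      simp [B5, hu1def, hu2def, hu3def, Matrix.vecHead, Matrix.vecTail]
    have b3 : B5 (α • u1 + β • u2 + γ • u3) u3 = -2*r₀^2*α + γ := by
      simp [B5, hu1def, hu2def, hu3def, Matrix.vecHead, Matrix.vecTail]
      try ring
    have b1 : B5 (α • u1 + β • u2 + γ • u3) u1
        = (4*r₀^4 - 4*r₀*t₀)*α + β - 2*r₀^2*γ := by
      simp [B5, hu1def, hu2def, hu3def, Matrix.vecHead, Matrix.vecTail]
      try ring
    have h2 := hB u2 hu2
    have h3 := hB u3 hu3
    have h1 := hB u1 hu1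
    rw [b2] at h2
    rw [b3] at h3
    rw [b1] at h1
    have hγ : γ = 0 := by linear_combination h3 + 2 * r₀ ^ 2 * h2
    have hβ : β = 0 := by
      linear_combination h1 - (4*r₀^4 - 4*r₀*t₀) * h2 + 2*r₀^2 * hγ
    rw [h2, hβ, hγ]
    simp
  -- part 2: orthogonal basis of Lorentzian signature
  have hsig : ∃ v₁ v₂ v₃ : Fin 5 → ℝ, v₁ ∈ T13 r₀ t₀ ∧ v₂ ∈ T13 r₀ t₀ ∧ v₃ ∈ T13 r₀ t₀ ∧
      B5 v₁ v₁ < 0 ∧ 0 < B5 v₂ v₂ ∧ 0 < B5 v₃ v₃ ∧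
      B5 v₁ v₂ = 0 ∧ B5 v₁ v₃ = 0 ∧ B5 v₂ v₃ = 0 ∧
      T13 r₀ t₀ = Submodule.span ℝ {v₁, v₂, v₃} := by
    set k : ℝ := 1/2 - 2*r₀*t₀ with hk
    set w1 : Fin 5 → ℝ := ![-k, -t₀ - r₀^3, 2*r₀^2, 1, 2*r₀] with hw1def
    set w2 : Fin 5 → ℝ := ![1 - k, -t₀ - r₀^3, 2*r₀^2, 1, 2*r₀] with hw2def
    have hw1eq : w1 = u1 + (2*r₀^2) • u3 + (-k) • u2 := by
      funext i
      fin_cases i <;> (simp [hw1def, hu1def, hu2def, hu3def, hk]; try ring)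
    have hw2eq : w2 = u1 + (2*r₀^2) • u3 + (1 - k) • u2 := by
      funext i
      fin_cases i <;> (simp [hw2def, hu1def, hu2def, hu3def, hk]; try ring)
    have hw1mem : w1 ∈ T13 r₀ t₀ := by
      rw [hw1eq]
      exact add_mem (add_mem hu1 (Submodule.smul_mem _ _ hu3)) (Submodule.smul_mem _ _ hu2)
    have hw2mem : w2 ∈ T13 r₀ t₀ := by
      rw [hw2eq]
      exact add_mem (add_mem hu1 (Submodule.smul_mem _ _ hu3)) (Submodule.smul_mem _ _ hu2)
    have hB11 : B5 w1 w1 = -1 := by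
      simp [B5, hw1def, hk, Matrix.vecHead, Matrix.vecTail]
      try ring
    have hB22 : B5 w2 w2 = 1 := by
      simp [B5, hw2def, hk, Matrix.vecHead, Matrix.vecTail]
      try ring
    have hB33 : B5 u3 u3 = 1 := by
      simp [B5, hu3def, Matrix.vecHead, Matrix.vecTail]
      try ring
    have hB12 : B5 w1 w2 = 0 := by
      simp [B5, hw1def, hw2def, hk, Matrix.vecHead, Matrix.vecTail]
      try ring
    have hB13 : B5 w1 u3 = 0 := by
      simp [B5, hw1def, hu3def, hk, Matrix.vecHead, Matrix.vecTail]
      try ring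
    have hB23 : B5 w2 u3 = 0 := by
      simp [B5, hw2def, hu3def, hk, Matrix.vecHead, Matrix.vecTail]
      try ring
    have hu2eq : u2 = w2 - w1 := by
      funext i
      fin_cases i <;> (simp [hw1def, hw2def, hu2def, hk]; try ring)
    have hu1eq : u1 = (1 - k) • w1 + k • w2 + (-(2*r₀^2)) • u3 := by
      funext i
      fin_cases i <;> (simp [hw1def, hw2def, hu1def, hu3def, hk]; try ring)
    refine ⟨w1, w2, u3, hw1mem, hw2mem, hu3, by rw [hB11]; norm_num,
      by rw [hB22]; norm_num, by rw [hB33]; norm_num, hB12, hB13, hB23, ?_⟩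
    rw [hT]
    apply le_antisymm
    · rw [Submodule.span_le]
      have hv1 : w1 ∈ Submodule.span ℝ ({w1, w2, u3} : Set (Fin 5 → ℝ)) :=
        Submodule.subset_span (by simp)
      have hv2 : w2 ∈ Submodule.span ℝ ({w1, w2, u3} : Set (Fin 5 → ℝ)) :=
        Submodule.subset_span (by simp)
      have hv3 : u3 ∈ Submodule.span ℝ ({w1, w2, u3} : Set (Fin 5 → ℝ)) :=
        Submodule.subset_span (by simp)
      rintro x hx
      simp only [Set.mem_insert_iff, Set.mem_singleton_iff] at hx
      rcases hx with rfl | rfl | rfl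
      · rw [hu1eq]
        exact add_mem (add_mem (Submodule.smul_mem _ _ hv1) (Submodule.smul_mem _ _ hv2))
          (Submodule.smul_mem _ _ hv3)
      · rw [hu2eq]
        exact sub_mem hv2 hv1
      · exact hv3
    · rw [Submodule.span_le]
      rintro x hx
      simp only [Set.mem_insert_iff, Set.mem_singleton_iff] at hx
      rcases hx with rfl | rfl | rfl
      · rw [← hT] at *
        exact hw1mem
      · rw [← hT] at *
        exact hw2mem
      · rw [← hT] at *
        exact hu3
  -- part 4: IsCompl
  have hcompl : IsCompl (T13 r₀ t₀) (perp5 (T13 r₀ t₀)) := by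
    constructor
    · rw [Submodule.disjoint_def]
      intro x hxT hxP
      exact hnd x hxT (fun u' hu' => hxP u' hu')
    · rw [codisjoint_iff, eq_top_iff]
      rintro x -
      refine Submodule.mem_sup.2
        ⟨(x 3) • u1 + (x 0 + 2*r₀*x 1 + 2*r₀^2*x 2 + 4*r₀*t₀*x 3 - (t₀ + r₀^3)*x 4) • u2
          + (x 2 + 2*r₀^2*x 3 - r₀*x 4) • u3,
         add_mem (add_mem (Submodule.smul_mem _ _ hu1) (Submodule.smul_mem _ _ hu2))
           (Submodule.smul_mem _ _ hu3),
         x - ((x 3) • u1 + (x 0 + 2*r₀*x 1 + 2*r₀^2*x 2 + 4*r₀*t₀*x 3 - (t₀ + r₀^3)*x 4) • u2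
          + (x 2 + 2*r₀^2*x 3 - r₀*x 4) • u3), ?_, by abel⟩
      rw [hT]
      apply mem_perp5_span
      rintro z hz
      simp only [Set.mem_insert_iff, Set.mem_singleton_iff] at hz
      rcases hz with rfl | rfl | rfl <;>
        · simp [B5, hu1def, hu2def, hu3def, Matrix.vecHead, Matrix.vecTail]
          try ring
  refine ⟨hfin, hsig, hnd, hcompl, refl13 r₀ s₀ t₀, ?_, ?_⟩
  · -- reflection property
    intro v hv w hw
    rw [hT] at hv
    obtain ⟨α, β, γ, rfl⟩ := mem_span_triple hv
    have be1 : B5 w u1 = w 0 + 2*r₀*w 1 + (r₀^3 - t₀)*w 4 := by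
      simp [B5, hu1def, Matrix.vecHead, Matrix.vecTail]
      try ring
    have be2 : B5 w u2 = w 3 := by
      simp [B5, hu2def, Matrix.vecHead, Matrix.vecTail]
    have be3 : B5 w u3 = w 2 - r₀ * w 4 := by
      simp [B5, hu3def, Matrix.vecHead, Matrix.vecTail]
      try ring
    have e1 := hw u1 hu1
    have e2 := hw u2 hu2
    have e3 := hw u3 hu3
    rw [be1] at e1
    rw [be2] at e2
    rw [be3] at e3
    have hw3 : w 3 = 0 := e2
    have hw2 : w 2 = r₀ * w 4 := by linear_combination e3
    have hw0 : w 0 = -2*r₀*w 1 - (r₀^3 - t₀)*w 4 := by linear_combination e1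
    have hRw : Rm13 r₀ t₀ w = w := by
      funext i
      fin_cases i <;> (simp [Rm13, hw0, hw2, hw3]; try ring)
    have hRu1 : Rm13 r₀ t₀ u1 = -u1 := by
      funext i
      fin_cases i <;> (simp [Rm13, hu1def]; try ring)
    have hRu2 : Rm13 r₀ t₀ u2 = -u2 := by
      funext i
      fin_cases i <;> (simp [Rm13, hu2def]; try ring)
    have hRu3 : Rm13 r₀ t₀ u3 = -u3 := by
      funext i
      fin_cases i <;> (simp [Rm13, hu3def]; try ring)
    have hstep : f13 (r₀, s₀, t₀) + (α • u1 + β • u2 + γ • u3) + w - f13 (r₀, s₀, t₀)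
        = (α • u1 + β • u2 + γ • u3) + w := by abel
    show f13 (r₀, s₀, t₀)
        + Rm13 r₀ t₀ (f13 (r₀, s₀, t₀) + (α • u1 + β • u2 + γ • u3) + w - f13 (r₀, s₀, t₀))
        = _
    rw [hstep, Rm13_add, Rm13_add, Rm13_add, Rm13_smul, Rm13_smul, Rm13_smul,
      hRu1, hRu2, hRu3, hRw]
    simp only [smul_neg]
    abel
  · -- BijOn
    refine ⟨?_, ?_, ?_⟩
    · rintro x ⟨q, rfl⟩
      exact ⟨g13 r₀ s₀ t₀ q, (refl13_f r₀ s₀ t₀ q).symm⟩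
    · intro x _ y _ h
      have h2 := congrArg (refl13 r₀ s₀ t₀) h
      rwa [refl13_invol, refl13_invol] at h2
    · rintro x ⟨q, rfl⟩
      refine ⟨refl13 r₀ s₀ t₀ (f13 q), ?_, refl13_invol r₀ s₀ t₀ (f13 q)⟩
      rw [refl13_f]
      exact ⟨g13 r₀ s₀ t₀ q, rfl⟩
end

section
/- Let (V,⟨·,·⟩) be a finite-dimensional real vector space with a positive definite inner product, D an antisymmetric endomorphism of V with D² = −id, θ an isometric involution of V with D∘θ = −θ∘D, and R a finite-dimensional real vector space. Set V₋ := ker(θ + id), let Ω := {ω : V × V → R bilinear : ω(x,y) = −ω(y,x), ω(Dx,y) + ω(x,Dy) = 0, ω(θx,θy) = −ω(x,y) for all x,y}, and let S := {b : V₋ × V₋ → R bilinear symmetric}. Let G := {U : V → V linear : ⟨Ux,Uy⟩ = ⟨x,y⟩, U∘D = D∘U, U∘θ = θ∘U} and let O(V₋) be the orthogonal group of V₋ with the restricted inner product. The group G × GL(R) acts on Ω by ((U,g)·ω)(x,y) := g(ω(U⁻¹x, U⁻¹y)) and O(V₋) × GL(R) acts on S by ((Ū,g)·b)(x,y) :=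 g(b(Ū⁻¹x, Ū⁻¹y)). Then the map ω ↦ b_ω, b_ω(x,y) := ω(Dx,y) for x,y ∈ V₋, induces a bijection from the orbit space Ω/(G × GL(R)) onto the orbit space S/(O(V₋) × GL(R)). -/
open LinearMap

/-- The space Ω of antisymmetric, D-invariant, θ-anti-invariant R-valued bilinear maps. -/
def Omega16 {V R : Type*} [AddCommGroup V] [Module ℝ V] [AddCommGroup R] [Module ℝ R]
    (D θ : V →ₗ[ℝ] V) : Set (V →ₗ[ℝ] V →ₗ[ℝ] R) :=
  {ω | (∀ x y, ω x y = -(ω y x)) ∧ (∀ x y, ω (D x) y + ω x (D y) = 0) ∧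
    ∀ x y, ω (θ x) (θ y) = -(ω x y)}

/-- The map ω ↦ b_ω, b_ω(x,y) = ω(Dx,y) on V₋ = ker(θ + id). -/
noncomputable def bmap16 {V R : Type*} [AddCommGroup V] [Module ℝ V]
    [AddCommGroup R] [Module ℝ R] (D θ : V →ₗ[ℝ] V) (ω : V →ₗ[ℝ] V →ₗ[ℝ] R) :
    ↥(LinearMap.ker (θ + LinearMap.id)) →ₗ[ℝ]
      ↥(LinearMap.ker (θ + LinearMap.id)) →ₗ[ℝ] R :=
  (ω ∘ₗ (D ∘ₗ (LinearMap.ker (θ + LinearMap.id)).subtype)).compl₂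
    ((LinearMap.ker (θ + LinearMap.id)).subtype)

/-- The set S of symmetric R-valued bilinear maps on V₋. -/
def S16 {V R : Type*} [AddCommGroup V] [Module ℝ V] [AddCommGroup R] [Module ℝ R]
    (θ : V →ₗ[ℝ] V) :
    Set (↥(LinearMap.ker (θ + LinearMap.id)) →ₗ[ℝ]
      ↥(LinearMap.ker (θ + LinearMap.id)) →ₗ[ℝ] R) :=
  {b | ∀ x y, b x y = b y x}

section Aux
variable {V R : Type*} [AddCommGroup V] [Module ℝ V] [AddCommGroup R] [Module ℝ R]

theorem half16 {a : R} (h : a = -a) : a = 0 := by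
  have h2 : (2:ℝ) • a = 0 := by rw [two_smul]; nth_rewrite 1 [h]; simp
  have : a = (2⁻¹ : ℝ) • ((2:ℝ) • a) := by rw [smul_smul]; norm_num
  rw [this, h2, smul_zero]

noncomputable def fm16 (θ : V →ₗ[ℝ] V) (hθ2 : ∀ x, θ (θ x) = x) :
    V →ₗ[ℝ] ↥(LinearMap.ker (θ + LinearMap.id)) :=
  LinearMap.codRestrict _ ((1/2 : ℝ) • (LinearMap.id - θ)) fun x => by
    simp only [LinearMap.mem_ker, LinearMap.add_apply, LinearMap.smul_apply,
      LinearMap.sub_apply, LinearMap.id_apply, map_smul, map_sub, hθ2]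
    module

noncomputable def gm16 (D θ : V →ₗ[ℝ] V)
    (hθD : ∀ x, θ (D x) = -(D (θ x))) (hθ2 : ∀ x, θ (θ x) = x) :
    V →ₗ[ℝ] ↥(LinearMap.ker (θ + LinearMap.id)) :=
  LinearMap.codRestrict _ ((-(1/2) : ℝ) • (D ∘ₗ (LinearMap.id + θ))) fun x => by
    simp only [LinearMap.mem_ker, LinearMap.add_apply, LinearMap.smul_apply,
      LinearMap.comp_apply, LinearMap.id_apply, map_smul, map_add, hθD, hθ2]
    module

variable (D θ : V →ₗ[ℝ] V) (hθ2 : ∀ x, θ (θ x) = x)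
  (hθD : ∀ x, θ (D x) = -(D (θ x)))

theorem coe_fm16 (x : V) : ((fm16 θ hθ2 x : V)) = (1/2 : ℝ) • (x - θ x) := rfl

theorem coe_gm16 (x : V) : ((gm16 D θ hθD hθ2 x : V)) = (-(1/2) : ℝ) • (D x + D (θ x)) := by
  show (-(1/2) : ℝ) • (D (x + θ x)) = _
  rw [map_add]

theorem memK16 (u : ↥(LinearMap.ker (θ + LinearMap.id))) : θ ↑u = -(↑u : V) := by
  have h := u.2
  simp only [LinearMap.mem_ker, LinearMap.add_apply, LinearMap.id_apply] at h
  exact eq_neg_of_add_eq_zero_left h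

theorem θDK16 (hθD : ∀ x, θ (D x) = -(D (θ x))) (u : ↥(LinearMap.ker (θ + LinearMap.id))) : θ (D ↑u) = D ↑u := by
  rw [hθD, memK16 θ u, map_neg, neg_neg]

theorem decomp16 (hD2 : ∀ x, D (D x) = -x) (x : V) : ↑(fm16 θ hθ2 x) + D ↑(gm16 D θ hθD hθ2 x) = x := by
  rw [coe_fm16, coe_gm16, map_smul, map_add, hD2, hD2]
  module

theorem fm_D16 (x : V) : fm16 θ hθ2 (D x) = -(gm16 D θ hθD hθ2 x) := by
  apply Subtype.ext
  rw [Submodule.coe_neg, coe_fm16, coe_gm16, hθD]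
  module

theorem gm_D16 (hD2 : ∀ x, D (D x) = -x) (x : V) : gm16 D θ hθD hθ2 (D x) = fm16 θ hθ2 x := by
  apply Subtype.ext
  rw [coe_gm16, coe_fm16, hθD, map_neg, hD2, hD2]
  module

theorem fm_θ16 (x : V) : fm16 θ hθ2 (θ x) = -(fm16 θ hθ2 x) := by
  apply Subtype.ext
  rw [Submodule.coe_neg, coe_fm16, coe_fm16, hθ2]
  module

theorem gm_θ16 (x : V) : gm16 D θ hθD hθ2 (θ x) = gm16 D θ hθD hθ2 x := by
  apply Subtype.ext
  rw [coe_gm16, coe_gm16, hθ2]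
  module

theorem fm_coe16 (u : ↥(LinearMap.ker (θ + LinearMap.id))) : fm16 θ hθ2 ↑u = u := by
  apply Subtype.ext
  rw [coe_fm16, memK16 θ u]
  module

theorem gm_coe16 (u : ↥(LinearMap.ker (θ + LinearMap.id))) : gm16 D θ hθD hθ2 ↑u = 0 := by
  apply Subtype.ext
  rw [coe_gm16, memK16 θ u, map_neg, ZeroMemClass.coe_zero]
  module
end Aux

section Aux2
variable {V R : Type*} [AddCommGroup V] [Module ℝ V] [AddCommGroup R] [Module ℝ R]
variable (D θ : V →ₗ[ℝ] V) (hθ2 : ∀ x, θ (θ x) = x)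
  (hθD : ∀ x, θ (D x) = -(D (θ x)))

theorem bmap_apply16 (ω : V →ₗ[ℝ] V →ₗ[ℝ] R)
    (u v : ↥(LinearMap.ker (θ + LinearMap.id))) :
    bmap16 D θ ω u v = ω (D ↑u) ↑v := rfl

theorem omega_mm16 {ω : V →ₗ[ℝ] V →ₗ[ℝ] R} (hω : ω ∈ Omega16 (R := R) D θ)
    (u v : ↥(LinearMap.ker (θ + LinearMap.id))) : ω ↑u ↑v = 0 := by
  have h := hω.2.2 (↑u) (↑v)
  rw [memK16 θ u, memK16 θ v] at h
  simp only [map_neg, LinearMap.neg_apply, neg_neg] at h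
  exact half16 h

theorem omega_pp16 (hθD : ∀ x, θ (D x) = -(D (θ x))) {ω : V →ₗ[ℝ] V →ₗ[ℝ] R} (hω : ω ∈ Omega16 (R := R) D θ)
    (u v : ↥(LinearMap.ker (θ + LinearMap.id))) : ω (D ↑u) (D ↑v) = 0 := by
  have h := hω.2.2 (D ↑u) (D ↑v)
  rw [θDK16 D θ hθD u, θDK16 D θ hθD v] at h
  exact half16 h

theorem omega_recon16 (hD2 : ∀ x, D (D x) = -x) {ω : V →ₗ[ℝ] V →ₗ[ℝ] R}
    (hω : ω ∈ Omega16 (R := R) D θ) (x y : V) :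
    ω x y = ω (D ↑(gm16 D θ hθD hθ2 x)) ↑(fm16 θ hθ2 y)
      - ω (D ↑(fm16 θ hθ2 x)) ↑(gm16 D θ hθD hθ2 y) := by
  conv_lhs => rw [← decomp16 D θ hθ2 hθD hD2 x, ← decomp16 D θ hθ2 hθD hD2 y]
  simp only [map_add, LinearMap.add_apply]
  rw [omega_mm16 D θ hω, omega_pp16 D θ hθD hω]
  have h1 : ω ↑(fm16 θ hθ2 x) (D ↑(gm16 D θ hθD hθ2 y))
      = -(ω (D ↑(fm16 θ hθ2 x)) ↑(gm16 D θ hθD hθ2 y)) :=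
    eq_neg_of_add_eq_zero_right (hω.2.1 _ _)
  rw [h1]
  abel

noncomputable def omegaOf16 (b : ↥(LinearMap.ker (θ + LinearMap.id)) →ₗ[ℝ]
    ↥(LinearMap.ker (θ + LinearMap.id)) →ₗ[ℝ] R) : V →ₗ[ℝ] V →ₗ[ℝ] R :=
  (b ∘ₗ gm16 D θ hθD hθ2).compl₂ (fm16 θ hθ2) - (b ∘ₗ fm16 θ hθ2).compl₂ (gm16 D θ hθD hθ2)

theorem omegaOf_apply16 (b : ↥(LinearMap.ker (θ + LinearMap.id)) →ₗ[ℝ]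
    ↥(LinearMap.ker (θ + LinearMap.id)) →ₗ[ℝ] R) (x y : V) :
    omegaOf16 D θ hθ2 hθD b x y
      = b (gm16 D θ hθD hθ2 x) (fm16 θ hθ2 y) - b (fm16 θ hθ2 x) (gm16 D θ hθD hθ2 y) := rfl

noncomputable def Umap16 (W : ↥(LinearMap.ker (θ + LinearMap.id)) →ₗ[ℝ]
    ↥(LinearMap.ker (θ + LinearMap.id))) : V →ₗ[ℝ] V :=
  (LinearMap.ker (θ + LinearMap.id)).subtype ∘ₗ W ∘ₗ fm16 θ hθ2
    + D ∘ₗ ((LinearMap.ker (θ + LinearMap.id)).subtype ∘ₗ W ∘ₗ gm16 D θ hθD hθ2)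

theorem Umap_apply16 (W : ↥(LinearMap.ker (θ + LinearMap.id)) →ₗ[ℝ]
    ↥(LinearMap.ker (θ + LinearMap.id))) (x : V) :
    Umap16 D θ hθ2 hθD W x = ↑(W (fm16 θ hθ2 x)) + D ↑(W (gm16 D θ hθD hθ2 x)) := rfl

theorem fm_Umap16 (W : ↥(LinearMap.ker (θ + LinearMap.id)) →ₗ[ℝ]
    ↥(LinearMap.ker (θ + LinearMap.id))) (x : V) :
    fm16 θ hθ2 (Umap16 D θ hθ2 hθD W x) = W (fm16 θ hθ2 x) := by
  rw [Umap_apply16, map_add, fm_coe16, fm_D16 D θ hθ2 hθD, gm_coe16, neg_zero, add_zero]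

theorem gm_Umap16 (hD2 : ∀ x, D (D x) = -x) (W : ↥(LinearMap.ker (θ + LinearMap.id)) →ₗ[ℝ]
    ↥(LinearMap.ker (θ + LinearMap.id))) (x : V) :
    gm16 D θ hθD hθ2 (Umap16 D θ hθ2 hθD W x) = W (gm16 D θ hθD hθ2 x) := by
  rw [Umap_apply16, map_add, gm_coe16, gm_D16 D θ hθ2 hθD hD2, fm_coe16, zero_add]

end Aux2

/-- ω ↦ ω(D·,·) induces a bijection Ω/(G × GL(R)) → S²(V₋,R)/(O(V₋) × GL(R)):
it maps Ω to S, is onto S, and two elements of Ω are in the same (G × GL(R))-orbit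
iff their images are in the same (O(V₋) × GL(R))-orbit. -/
theorem stmt16 {V R : Type*} [AddCommGroup V] [Module ℝ V] [FiniteDimensional ℝ V]
    [AddCommGroup R] [Module ℝ R] [FiniteDimensional ℝ R]
    (B : LinearMap.BilinForm ℝ V)
    (hsymm : ∀ x y, B x y = B y x)
    (hpos : ∀ x : V, x ≠ 0 → 0 < B x x)
    (D : V →ₗ[ℝ] V)
    (hDskew : ∀ x y, B (D x) y = -(B x (D y)))
    (hD2 : D ∘ₗ D = -LinearMap.id)
    (θ : V →ₗ[ℝ] V)
    (hθ2 : θ ∘ₗ θ = LinearMap.id)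
    (hθiso : ∀ x y, B (θ x) (θ y) = B x y)
    (hDθ : D ∘ₗ θ = -(θ ∘ₗ D)) :
    (∀ ω ∈ Omega16 (R := R) D θ, bmap16 D θ ω ∈ S16 (R := R) θ) ∧
      (∀ b ∈ S16 (R := R) θ, ∃ ω ∈ Omega16 (R := R) D θ, bmap16 D θ ω = b) ∧
      (∀ ω ∈ Omega16 (R := R) D θ, ∀ ω' ∈ Omega16 (R := R) D θ,
        ((∃ U : V ≃ₗ[ℝ] V, (∀ x y, B (U x) (U y) = B x y) ∧
            (∀ x, U (D x) = D (U x)) ∧ (∀ x, U (θ x) = θ (U x)) ∧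
            ∃ gR : R ≃ₗ[ℝ] R, ∀ x y, ω' (U x) (U y) = gR (ω x y)) ↔
          (∃ Ubar : ↥(LinearMap.ker (θ + LinearMap.id)) ≃ₗ[ℝ]
              ↥(LinearMap.ker (θ + LinearMap.id)),
            (∀ x y : ↥(LinearMap.ker (θ + LinearMap.id)),
              B ↑(Ubar x) ↑(Ubar y) = B ↑x ↑y) ∧
            ∃ gR : R ≃ₗ[ℝ] R, ∀ x y, bmap16 D θ ω' (Ubar x) (Ubar y) =
              gR (bmap16 D θ ω x y)))) := by
  have hθ2' : ∀ x, θ (θ x) = x := fun x => by simpa using LinearMap.congr_fun hθ2 x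
  have hD2' : ∀ x, D (D x) = -x := fun x => by simpa using LinearMap.congr_fun hD2 x
  have hDθ' : ∀ x, D (θ x) = -(θ (D x)) := fun x => by simpa using LinearMap.congr_fun hDθ x
  have hθD' : ∀ x, θ (D x) = -(D (θ x)) := fun x => by rw [hDθ' x, neg_neg]
  refine ⟨?_, ?_, ?_⟩
  · -- part 1: bmap maps Omega into S
    intro ω hω u v
    rw [bmap_apply16, bmap_apply16]
    have h2 : ω (D ↑u) ↑v = -(ω ↑u (D ↑v)) :=
      eq_neg_of_add_eq_zero_left (hω.2.1 (↑u : V) (↑v : V))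
    have h1 := hω.1 (↑u : V) (D ↑v)
    rw [h2, h1, neg_neg]
  · -- part 2: surjectivity onto S
    intro b hb
    refine ⟨omegaOf16 D θ hθ2' hθD' b, ⟨?_, ?_, ?_⟩, ?_⟩
    · intro x y
      rw [omegaOf_apply16, omegaOf_apply16,
        hb (gm16 D θ hθD' hθ2' y) (fm16 θ hθ2' x),
        hb (fm16 θ hθ2' y) (gm16 D θ hθD' hθ2' x)]
      abel
    · intro x y
      rw [omegaOf_apply16, omegaOf_apply16, gm_D16 D θ hθ2' hθD' hD2',
        fm_D16 D θ hθ2' hθD', fm_D16 D θ hθ2' hθD', gm_D16 D θ hθ2' hθD' hD2']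
      simp only [map_neg, LinearMap.neg_apply]
      abel
    · intro x y
      rw [omegaOf_apply16, omegaOf_apply16, fm_θ16 θ hθ2', gm_θ16 D θ hθ2' hθD',
        fm_θ16 θ hθ2', gm_θ16 D θ hθ2' hθD']
      simp only [map_neg, LinearMap.neg_apply]
      abel
    · apply LinearMap.ext; intro u; apply LinearMap.ext; intro v
      rw [bmap_apply16, omegaOf_apply16, gm_D16 D θ hθ2' hθD' hD2',
        fm_D16 D θ hθ2' hθD', fm_coe16, fm_coe16, gm_coe16]
      simp
  · -- part 3: orbit equivalence
    intro ω hω ω' hω'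
    constructor
    · rintro ⟨U, hUB, hUD, hUθ, gR, hgR⟩
      have hUθ' : ∀ x, U.symm (θ x) = θ (U.symm x) := by
        intro x
        apply U.injective
        rw [U.apply_symm_apply, hUθ, U.apply_symm_apply]
      have hUK : ∀ u ∈ LinearMap.ker (θ + LinearMap.id),
          (U : V →ₗ[ℝ] V) u ∈ LinearMap.ker (θ + LinearMap.id) := by
        intro u hu
        simp only [LinearMap.mem_ker, LinearMap.add_apply, LinearMap.id_apply,
          LinearEquiv.coe_coe] at hu ⊢
        rw [← hUθ, ← map_add, hu, map_zero]
      have hUK' : ∀ u ∈ LinearMap.ker (θ + LinearMap.id),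
          (U.symm : V →ₗ[ℝ] V) u ∈ LinearMap.ker (θ + LinearMap.id) := by
        intro u hu
        simp only [LinearMap.mem_ker, LinearMap.add_apply, LinearMap.id_apply,
          LinearEquiv.coe_coe] at hu ⊢
        rw [← hUθ', ← map_add, hu, map_zero]
      refine ⟨LinearEquiv.ofLinear ((U : V →ₗ[ℝ] V).restrict hUK)
        ((U.symm : V →ₗ[ℝ] V).restrict hUK')
        (LinearMap.ext fun u => Subtype.ext (by
          simp [LinearMap.restrict_apply]))
        (LinearMap.ext fun u => Subtype.ext (by
          simp [LinearMap.restrict_apply])), ?_, gR, ?_⟩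
      · intro u v
        simp only [LinearEquiv.ofLinear_apply, LinearMap.restrict_coe_apply,
          LinearEquiv.coe_coe]
        exact hUB ↑u ↑v
      · intro u v
        rw [bmap_apply16, bmap_apply16]
        simp only [LinearEquiv.ofLinear_apply, LinearMap.restrict_coe_apply,
          LinearEquiv.coe_coe]
        rw [← hUD, hgR]
    · rintro ⟨e, heB, gR, hgR⟩
      have horth : ∀ (u v : ↥(LinearMap.ker (θ + LinearMap.id))), B (D ↑u) ↑v = 0 := by
        intro u v
        have h := hθiso (D ↑u) ↑v
        rw [θDK16 D θ hθD' u, memK16 θ v, map_neg] at h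
        linarith
      have hBDD : ∀ a c : V, B (D a) (D c) = B a c := by
        intro a c
        rw [hDskew, hD2', map_neg, neg_neg]
      have hBsum : ∀ x y : V, B x y
          = B ↑(fm16 θ hθ2' x) ↑(fm16 θ hθ2' y)
            + B ↑(gm16 D θ hθD' hθ2' x) ↑(gm16 D θ hθD' hθ2' y) := by
        intro x y
        conv_lhs => rw [← decomp16 D θ hθ2' hθD' hD2' x, ← decomp16 D θ hθ2' hθD' hD2' y]
        simp only [map_add, LinearMap.add_apply]
        have e1 : B ↑(fm16 θ hθ2' x) (D ↑(gm16 D θ hθD' hθ2' y)) = 0 := by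
          rw [hsymm]; exact horth _ _
        have e2 : B (D ↑(gm16 D θ hθD' hθ2' x)) ↑(fm16 θ hθ2' y) = 0 := horth _ _
        have e3 := hBDD ↑(gm16 D θ hθD' hθ2' x) ↑(gm16 D θ hθD' hθ2' y)
        rw [e1, e2, e3]
        ring
      refine ⟨LinearEquiv.ofLinear (Umap16 D θ hθ2' hθD' (e : _ →ₗ[ℝ] _))
        (Umap16 D θ hθ2' hθD' (e.symm : _ →ₗ[ℝ] _))
        (LinearMap.ext fun x => by
          rw [LinearMap.comp_apply, Umap_apply16, fm_Umap16, gm_Umap16 D θ hθ2' hθD' hD2']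
          simp only [LinearEquiv.coe_coe, LinearEquiv.apply_symm_apply, LinearMap.id_apply]
          exact decomp16 D θ hθ2' hθD' hD2' x)
        (LinearMap.ext fun x => by
          rw [LinearMap.comp_apply, Umap_apply16, fm_Umap16, gm_Umap16 D θ hθ2' hθD' hD2']
          simp only [LinearEquiv.coe_coe, LinearEquiv.symm_apply_apply, LinearMap.id_apply]
          exact decomp16 D θ hθ2' hθD' hD2' x), ?_, ?_, ?_, gR, ?_⟩
      · -- isometry
        intro x y
        simp only [LinearEquiv.ofLinear_apply]
        rw [hBsum (Umap16 D θ hθ2' hθD' (e : _ →ₗ[ℝ] _) x)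
            (Umap16 D θ hθ2' hθD' (e : _ →ₗ[ℝ] _) y),
          fm_Umap16, fm_Umap16, gm_Umap16 D θ hθ2' hθD' hD2',
          gm_Umap16 D θ hθ2' hθD' hD2']
        simp only [LinearEquiv.coe_coe]
        rw [heB, heB, ← hBsum]
      · -- commutes with D
        intro x
        simp only [LinearEquiv.ofLinear_apply]
        rw [Umap_apply16, Umap_apply16, fm_D16 D θ hθ2' hθD', gm_D16 D θ hθ2' hθD' hD2']
        simp only [map_neg, Submodule.coe_neg, map_add, hD2']
        abel
      · -- commutes with θ
        intro x
        simp only [LinearEquiv.ofLinear_apply]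
        rw [Umap_apply16, Umap_apply16, fm_θ16 θ hθ2', gm_θ16 D θ hθ2' hθD',
          map_add θ, memK16 θ ((e : _ →ₗ[ℝ] _) (fm16 θ hθ2' x)),
          θDK16 D θ hθD' ((e : _ →ₗ[ℝ] _) (gm16 D θ hθD' hθ2' x))]
        simp only [map_neg, Submodule.coe_neg]
      · -- gR relation
        intro x y
        have hgR' : ∀ u v, ω' (D ↑(e u)) ↑(e v) = gR (ω (D ↑u) ↑v) := hgR
        simp only [LinearEquiv.ofLinear_apply]
        rw [omega_recon16 D θ hθ2' hθD' hD2' hω'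
            (Umap16 D θ hθ2' hθD' (e : _ →ₗ[ℝ] _) x)
            (Umap16 D θ hθ2' hθD' (e : _ →ₗ[ℝ] _) y),
          fm_Umap16, fm_Umap16, gm_Umap16 D θ hθ2' hθD' hD2',
          gm_Umap16 D θ hθ2' hθD' hD2']
        simp only [LinearEquiv.coe_coe]
        rw [hgR', hgR', ← map_sub,
          omega_recon16 D θ hθ2' hθD' hD2' hω x y]
end

section
/- Let (g,⟨·,·⟩,D,θ) be a full extrinsic symmetric triple. Then (g,⟨·,·⟩,D) is a hermitian symmetric triple, i.e. [g⁻, g⁻] = g⁺, where g⁺ = ker D, g⁻ = ker(D² + id), and brackets of subspaces denote the linear span of all brackets of elements. -/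
/-- The span of all brackets of elements of two submodules of a Lie algebra. -/
def bracketSpan {g : Type*} [LieRing g] [LieAlgebra ℝ g] (s t : Submodule ℝ g) :
    Submodule ℝ g :=
  Submodule.span ℝ {z | ∃ x ∈ s, ∃ y ∈ t, z = ⁅x, y⁆}

/-- If (g,⟨·,·⟩,D,θ) is a full extrinsic symmetric triple, then (g,⟨·,·⟩,D) is a hermitian
symmetric triple, i.e. [g⁻,g⁻] = g⁺. -/
theorem stmt18 {g : Type*} [LieRing g] [LieAlgebra ℝ g] [Module.Finite ℝ g]
    (B : LinearMap.BilinForm ℝ g)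
    (hsymm : ∀ x y, B x y = B y x)
    (hnd : B.Nondegenerate)
    (hinv : ∀ x y z : g, B ⁅x, y⁆ z + B y ⁅x, z⁆ = 0)
    (D : g →ₗ[ℝ] g)
    (hDder : ∀ x y : g, D ⁅x, y⁆ = ⁅D x, y⁆ + ⁅x, D y⁆)
    (hDskew : ∀ x y, B (D x) y = -(B x (D y)))
    (hD3 : D ∘ₗ D ∘ₗ D = -D)
    (θ : g →ₗ[ℝ] g)
    (hθ2 : θ ∘ₗ θ = LinearMap.id)
    (hθlie : ∀ x y : g, θ ⁅x, y⁆ = ⁅θ x, θ y⁆)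
    (hθiso : ∀ x y, B (θ x) (θ y) = B x y)
    (hDθ : D ∘ₗ θ = -(θ ∘ₗ D))
    (hext : bracketSpan
        (LinearMap.ker (θ - LinearMap.id) ⊓ LinearMap.ker (D ∘ₗ D + LinearMap.id))
        (LinearMap.ker (θ - LinearMap.id) ⊓ LinearMap.ker (D ∘ₗ D + LinearMap.id)) =
        LinearMap.ker (θ - LinearMap.id) ⊓ LinearMap.ker D)
    (hfull : bracketSpan
        (LinearMap.ker (θ - LinearMap.id) ⊓ LinearMap.ker (D ∘ₗ D + LinearMap.id))
        (LinearMap.ker (θ + LinearMap.id) ⊓ LinearMap.ker (D ∘ₗ D + LinearMap.id)) =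
        LinearMap.ker (θ + LinearMap.id) ⊓ LinearMap.ker D) :
    bracketSpan (LinearMap.ker (D ∘ₗ D + LinearMap.id))
        (LinearMap.ker (D ∘ₗ D + LinearMap.id)) =
      LinearMap.ker D := by
  have memK : ∀ x : g, x ∈ LinearMap.ker (D ∘ₗ D + LinearMap.id) ↔ D (D x) = -x := by
    intro x
    simp [LinearMap.mem_ker, add_eq_zero_iff_eq_neg]
  have memP : ∀ x : g, x ∈ LinearMap.ker (θ - LinearMap.id) ↔ θ x = x := by
    intro x
    simp [LinearMap.mem_ker, sub_eq_zero]
  have memM : ∀ x : g, x ∈ LinearMap.ker (θ + LinearMap.id) ↔ θ x = -x := by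
    intro x
    simp [LinearMap.mem_ker, add_eq_zero_iff_eq_neg]
  have hD3' : ∀ x : g, D (D (D x)) = -(D x) := by
    intro x
    simpa using LinearMap.congr_fun hD3 x
  have hDθ' : ∀ x : g, D (θ x) = -(θ (D x)) := by
    intro x
    simpa using LinearMap.congr_fun hDθ x
  have hθ2' : ∀ x : g, θ (θ x) = x := by
    intro x
    simpa using LinearMap.congr_fun hθ2 x
  set K := LinearMap.ker (D ∘ₗ D + LinearMap.id) with hKdef
  set sPm := LinearMap.ker (θ - LinearMap.id) ⊓ K with hsPm
  set sMm := LinearMap.ker (θ + LinearMap.id) ⊓ K with hsMm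
  -- D preserves ker(D²+1) and swaps the θ-eigenspaces
  have hDK : ∀ x : g, x ∈ K → D x ∈ K := by
    intro x hx
    rw [memK] at hx ⊢
    rw [hx]
    simp
  have hθK : ∀ x : g, x ∈ K → θ x ∈ K := by
    intro x hx
    rw [memK] at hx ⊢
    rw [hDθ', map_neg, hDθ', neg_neg, hx, map_neg]
  have hDPm : ∀ x : g, x ∈ sPm → D x ∈ sMm := by
    intro x hx
    obtain ⟨h1, h2⟩ := Submodule.mem_inf.mp hx
    rw [memP] at h1
    refine Submodule.mem_inf.mpr ⟨?_, hDK x h2⟩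
    rw [memM]
    have h := hDθ' x
    rw [h1] at h
    exact (neg_eq_iff_eq_neg.mpr h).symm
  have hDMm : ∀ x : g, x ∈ sMm → D x ∈ sPm := by
    intro x hx
    obtain ⟨h1, h2⟩ := Submodule.mem_inf.mp hx
    rw [memM] at h1
    refine Submodule.mem_inf.mpr ⟨?_, hDK x h2⟩
    rw [memP]
    have h := hDθ' x
    rw [h1, map_neg] at h
    simpa using h.symm
  -- mixed brackets lie in ker D
  have hmix : ∀ a ∈ sPm, ∀ b ∈ sMm, ⁅a, b⁆ ∈ LinearMap.ker D := by
    intro a ha b hb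
    have h : ⁅a, b⁆ ∈ bracketSpan sPm sMm :=
      Submodule.subset_span ⟨a, ha, b, hb, rfl⟩
    rw [hfull] at h
    exact (Submodule.mem_inf.mp h).2
  -- generic step: if the two "derived" brackets are in ker D, so is D⁅a,b⁆, hence D⁅a,b⁆ = 0
  have key : ∀ a b : g, D ⁅D a, b⁆ = 0 → D ⁅a, D b⁆ = 0 → D ⁅a, b⁆ = 0 := by
    intro a b h1 h2
    have hDD : D (D ⁅a, b⁆) = 0 := by
      rw [hDder, map_add, h1, h2, add_zero]
    have h3 := hD3' ⁅a, b⁆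
    rw [hDD, map_zero] at h3
    exact (neg_eq_zero.mp h3.symm)
  have hPP : ∀ a ∈ sPm, ∀ b ∈ sPm, D ⁅a, b⁆ = 0 := by
    intro a ha b hb
    refine key a b ?_ ?_
    · have h : (⁅D a, b⁆ : g) = -⁅b, D a⁆ := (lie_skew (D a) b).symm
      rw [h, map_neg, LinearMap.mem_ker.mp (hmix b hb (D a) (hDPm a ha)), neg_zero]
    · exact LinearMap.mem_ker.mp (hmix a ha (D b) (hDPm b hb))
  have hMM : ∀ a ∈ sMm, ∀ b ∈ sMm, D ⁅a, b⁆ = 0 := by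
    intro a ha b hb
    refine key a b ?_ ?_
    · exact LinearMap.mem_ker.mp (hmix (D a) (hDMm a ha) b hb)
    · have h : (⁅a, D b⁆ : g) = -⁅D b, a⁆ := (lie_skew a (D b)).symm
      rw [h, map_neg, LinearMap.mem_ker.mp (hmix (D b) (hDMm b hb) a ha), neg_zero]
  -- decomposition of an element of K into θ-eigencomponents
  have hdec : ∀ x : g, x ∈ K →
      ∃ p q : g, p ∈ sPm ∧ q ∈ sMm ∧ x = p + q := by
    intro x hx
    refine ⟨(1/2 : ℝ) • (x + θ x), (1/2 : ℝ) • (x - θ x),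
      Submodule.mem_inf.mpr ⟨?_, ?_⟩, Submodule.mem_inf.mpr ⟨?_, ?_⟩, ?_⟩
    · rw [memP]
      rw [map_smul, map_add, hθ2']
      ring_nf
      rw [add_comm]
    · exact Submodule.smul_mem _ _ (Submodule.add_mem _ hx (hθK x hx))
    · rw [memM]
      rw [map_smul, map_sub, hθ2', ← smul_neg]
      congr 1
      abel
    · exact Submodule.smul_mem _ _ (Submodule.sub_mem _ hx (hθK x hx))
    · rw [← smul_add]
      have : x + θ x + (x - θ x) = (2 : ℝ) • x := by
        rw [two_smul]; abel
      rw [this, smul_smul]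
      norm_num
  -- every bracket of two elements of K is killed by D
  have hbr : ∀ x ∈ K, ∀ y ∈ K, D ⁅x, y⁆ = 0 := by
    intro x hx y hy
    obtain ⟨p, q, hp, hq, hxe⟩ := hdec x hx
    obtain ⟨p', q', hp', hq', hye⟩ := hdec y hy
    have e1 : D ⁅q, p'⁆ = 0 := by
      have h : (⁅q, p'⁆ : g) = -⁅p', q⁆ := (lie_skew q p').symm
      rw [h, map_neg, LinearMap.mem_ker.mp (hmix p' hp' q hq), neg_zero]
    rw [hxe, hye, add_lie, lie_add, lie_add, map_add, map_add, map_add,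
      hPP p hp p' hp', LinearMap.mem_ker.mp (hmix p hp q' hq'), e1,
      hMM q hq q' hq']
    simp
  apply le_antisymm
  · rw [bracketSpan, Submodule.span_le]
    rintro z ⟨x, hx, y, hy, rfl⟩
    exact LinearMap.mem_ker.mpr (hbr x hx y hy)
  · intro z hz
    have hzker : D z = 0 := LinearMap.mem_ker.mp hz
    have hθz : θ z ∈ LinearMap.ker D := by
      rw [LinearMap.mem_ker, hDθ', hzker, map_zero, neg_zero]
    have hmono : ∀ s t : Submodule ℝ g, s ≤ K → t ≤ K →
        bracketSpan s t ≤ bracketSpan K K := by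
      intro s t hs ht
      apply Submodule.span_mono
      rintro w ⟨x, hx, y, hy, rfl⟩
      exact ⟨x, hs hx, y, ht hy, rfl⟩
    set zp := (1/2 : ℝ) • (z + θ z) with hzp
    set zm := (1/2 : ℝ) • (z - θ z) with hzm
    have hzpmem : zp ∈ LinearMap.ker (θ - LinearMap.id) ⊓ LinearMap.ker D := by
      refine Submodule.mem_inf.mpr ⟨?_, ?_⟩
      · rw [memP, hzp, map_smul, map_add, hθ2']
        ring_nf
        rw [add_comm]
      · rw [LinearMap.mem_ker, hzp, map_smul, map_add, hzker,
          LinearMap.mem_ker.mp hθz, add_zero, smul_zero]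
    have hzmmem : zm ∈ LinearMap.ker (θ + LinearMap.id) ⊓ LinearMap.ker D := by
      refine Submodule.mem_inf.mpr ⟨?_, ?_⟩
      · rw [memM, hzm, map_smul, map_sub, hθ2', ← smul_neg]
        congr 1
        abel
      · rw [LinearMap.mem_ker, hzm, map_smul, map_sub, hzker,
          LinearMap.mem_ker.mp hθz, sub_zero, smul_zero]
    have h1 : zp ∈ bracketSpan K K := by
      have := hext ▸ hzpmem
      exact hmono sPm sPm inf_le_right inf_le_right this
    have h2 : zm ∈ bracketSpan K K := by
      have := hfull ▸ hzmmem
      exact hmono sPm sMm inf_le_right inf_le_right this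
    have hze : z = zp + zm := by
      rw [hzp, hzm, ← smul_add]
      have : z + θ z + (z - θ z) = (2 : ℝ) • z := by
        rw [two_smul]; abel
      rw [this, smul_smul]
      norm_num
    rw [hze]
    exact Submodule.add_mem _ h1 h2
end
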